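/- arXiv:2203.03303 — 4 statements merged into one kernel-verified Lean document; each statement's English description precedes it below -/
import Mathlib

section
/- For any measurable function f on a measurable space X and any two probability measures q and p on X with q absolutely continuous with respect to p, the expectation of f under q is at most the KL divergence of q from p plus the logarithm of the expectation under p of exp(f). -/
open MeasureTheory InformationTheory

lemma integral_llr_nonneg {X : Type*} [MeasurableSpace X] {μ ν : Measure X}
    [IsProbabilityMeasure μ] [IsProbabilityMeasure ν] (hμν : μ ≪ ν)
    (h_int : Integrable (llr μ ν) μ) :
    0 ≤ ∫ x, llr μ ν x ∂μ := by
  simpa using integral_llr_add_sub_measure_univ_nonneg hμν h_int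

theorem stmt_0_general {X : Type*} [MeasurableSpace X] (q p : Measure X)
    [IsProbabilityMeasure q] [IsProbabilityMeasure p] (hqp : q ≪ p)
    (f : X → ℝ)
    (hexp : Integrable (fun x => Real.exp (f x)) p)
    (hfq : Integrable f q)
    (hllr : Integrable (fun x => Real.log ((q.rnDeriv p x).toReal)) q) :
    ∫ x, f x ∂q ≤
      (∫ x, Real.log ((q.rnDeriv p x).toReal) ∂q) + Real.log (∫ x, Real.exp (f x) ∂p) := by
  -- Gibbs' inequality against the Gibbs measure `p.tilted f ∝ exp f • p`.
  have : IsProbabilityMeasure (p.tilted f) := isProbabilityMeasure_tilted hexp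
  have h_gibbs := integral_llr_nonneg (hqp.trans (absolutelyContinuous_tilted hexp))
    (integrable_llr_tilted_right hqp hfq hllr hexp)
  rw [integral_llr_tilted_right hqp hfq hexp hllr] at h_gibbs
  change _ ≤ ∫ x, llr q p x ∂q + _
  linarith

/-- Compression lemma (Donsker–Varadhan change of measure). -/
theorem stmt_0 {X : Type*} [MeasurableSpace X] (q p : Measure X)
    [IsProbabilityMeasure q] [IsProbabilityMeasure p] (hqp : q ≪ p)
    (f : X → ℝ) (hf : Measurable f)
    (hexp : Integrable (fun x => Real.exp (f x)) p)
    (hfq : Integrable f q)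
    (hllr : Integrable (fun x => Real.log ((q.rnDeriv p x).toReal)) q) :
    ∫ x, f x ∂q ≤
      (∫ x, Real.log ((q.rnDeriv p x).toReal) ∂q) + Real.log (∫ x, Real.exp (f x) ∂p) :=
  stmt_0_general q p hqp f hexp hfq hllr
end

section
/- Let X₁,…,Xₙ be a supermartingale difference sequence (i.e. E[X_i | X₁,…,X_{i−1}] ≤ 0 for each i) such that X_i ∈ [a_i, b_i] almost surely for each i. Then for any λ > 0, E[exp(λ·Σ_{i=1}^n X_i)] ≤ exp((λ²/8)·Σ_{i=1}^n (b_i − a_i)²). -/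
/-!
On `[a, b]` the convex function `x ↦ exp (t x)` lies below its secant, an affine function of `x`
with nonnegative slope when `t ≥ 0`. Taking conditional expectations and using
`E[X | 𝒢] ≤ 0` bounds `E[exp (t X) | 𝒢]` by the value of the secant at `0`, which is the moment
generating function of the centred law on `{a, b}` and hence at most `exp (t² (b - a)² / 8)` by
Hoeffding's lemma. Peeling off the increments one at a time with the tower property gives the
product of these bounds.
-/

open MeasureTheory ProbabilityTheory Real

lemma exp_mul_le_secant {t a b x : ℝ} (hab : a < b) (hx : x ∈ Set.Icc a b) :
    exp (t * x) ≤ (b * exp (t * a) - a * exp (t * b)) / (b - a) +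
      (exp (t * b) - exp (t * a)) / (b - a) * x := by
  have hba : 0 < b - a := sub_pos.2 hab
  have hweights : (b - x) / (b - a) + (x - a) / (b - a) = 1 := by field_simp; ring
  have hconv := convexOn_exp.2 (Set.mem_univ (t * a)) (Set.mem_univ (t * b))
    (div_nonneg (sub_nonneg.2 hx.2) hba.le) (div_nonneg (sub_nonneg.2 hx.1) hba.le) hweights
  have hpoint : (b - x) / (b - a) * (t * a) + (x - a) / (b - a) * (t * b) = t * x := by
    field_simp; ring
  simp only [smul_eq_mul, hpoint] at hconv
  refine hconv.trans_eq ?_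
  field_simp
  ring

lemma secant_exp_mul_at_zero_le {a b : ℝ} (ha : a ≤ 0) (hb : 0 ≤ b) (hab : a < b) (t : ℝ) :
    (b * exp (t * a) - a * exp (t * b)) / (b - a) ≤ exp (t ^ 2 * (b - a) ^ 2 / 8) := by
  have hba : 0 < b - a := sub_pos.2 hab
  let p : unitInterval :=
    ⟨b / (b - a), div_nonneg hb hba.le, (div_le_one hba).2 (by linarith)⟩
  have hsupp : ∀ᵐ x ∂Ber(a, b, p), x ∈ Set.Icc a b := by
    rw [ae_iff]
    exact bernoulliMeasure_apply_of_notMem_of_notMem p measurableSet_Icc.compl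
      (by simp [hab.le]) (by simp [hab.le])
  have hmean : ∫ x, x ∂Ber(a, b, p) = 0 := by
    rw [integral_bernoulliMeasure]
    simp only [p, smul_eq_mul]
    field_simp
    ring
  have hmgf := (hasSubgaussianMGF_of_mem_Icc_of_integral_eq_zero (X := id) aemeasurable_id
    hsupp hmean).mgf_le t
  rw [mgf, integral_bernoulliMeasure] at hmgf
  convert hmgf using 1
  · simp only [p, id, smul_eq_mul]
    field_simp
    ring
  · congr 1
    push_cast
    rw [Real.norm_eq_abs, abs_of_pos hba]
    ring

section Conditional

variable {Ω : Type*} {m : MeasurableSpace Ω} [m0 : MeasurableSpace Ω] {μ : Measure Ω}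

lemma condExp_const_add_mul [IsFiniteMeasure μ] (hm : m ≤ m0) {X : Ω → ℝ} (hX : Integrable X μ)
    (c d : ℝ) : μ[fun ω => c + d * X ω | m] =ᵐ[μ] fun ω => c + d * μ[X | m] ω := by
  have hsplit : (fun ω => c + d * X ω) = (fun _ => c) + d • X := rfl
  rw [hsplit]
  filter_upwards [condExp_add (integrable_const c) (hX.smul d) m, condExp_smul d X m] with ω h1 h2
  rw [h1, Pi.add_apply, condExp_const hm, h2]
  rfl

lemma le_of_condExp_nonpos [NeZero μ] [IsFiniteMeasure μ] (hm : m ≤ m0) {X : Ω → ℝ} {a : ℝ}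
    (hX : Integrable X μ) (hle : ∀ᵐ ω ∂μ, a ≤ X ω) (hsuper : μ[X | m] ≤ᵐ[μ] 0) : a ≤ 0 := by
  have hcond := condExp_mono (m := m) (integrable_const a) hX hle
  rw [condExp_const hm] at hcond
  obtain ⟨ω, h1, h2⟩ := (hcond.and hsuper).exists
  exact h1.trans h2

lemma condExp_exp_mul_le [IsFiniteMeasure μ] (hm : m ≤ m0) {X : Ω → ℝ} (hX : AEMeasurable X μ)
    {a b t : ℝ} (ht : 0 ≤ t) (hmem : ∀ᵐ ω ∂μ, X ω ∈ Set.Icc a b) (hsuper : μ[X | m] ≤ᵐ[μ] 0) :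
    μ[fun ω => exp (t * X ω) | m] ≤ᵐ[μ] fun _ => exp (t ^ 2 * (b - a) ^ 2 / 8) := by
  rcases eq_zero_or_neZero μ with rfl | _
  · simp [Filter.EventuallyLE]
  have hXint := Integrable.of_mem_Icc a b hX hmem
  have hexp_int : Integrable (fun ω => exp (t * X ω)) μ := integrable_exp_mul_of_mem_Icc hX hmem
  rcases le_or_gt b 0 with hb | hb
  · have hle : (fun ω => exp (t * X ω)) ≤ᵐ[μ] fun _ => 1 := hmem.mono fun ω hω =>
      exp_le_one_iff.2 (mul_nonpos_of_nonneg_of_nonpos ht (hω.2.trans hb))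
    filter_upwards [condExp_mono (m := m) hexp_int (integrable_const 1) hle] with ω hω
    rw [condExp_const hm] at hω
    exact hω.trans (one_le_exp (by positivity))
  · have ha : a ≤ 0 := le_of_condExp_nonpos hm hXint (hmem.mono fun _ h => h.1) hsuper
    have hab : a < b := ha.trans_lt hb
    set c := (b * exp (t * a) - a * exp (t * b)) / (b - a)
    set d := (exp (t * b) - exp (t * a)) / (b - a)
    have hd : 0 ≤ d := div_nonneg (sub_nonneg.2 (exp_le_exp.2 (by gcongr))) (sub_pos.2 hab).le
    have hle : (fun ω => exp (t * X ω)) ≤ᵐ[μ] fun ω => c + d * X ω :=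
      hmem.mono fun ω hω => exp_mul_le_secant hab hω
    filter_upwards [condExp_mono (m := m) hexp_int
        ((integrable_const c).add (hXint.const_mul d)) hle,
      condExp_const_add_mul hm hXint c d, hsuper] with ω h1 h2 h3
    calc μ[fun ω => exp (t * X ω) | m] ω ≤ c + d * μ[X | m] ω := h1.trans_eq h2
      _ ≤ c := add_le_of_nonpos_right (mul_nonpos_of_nonneg_of_nonpos hd h3)
      _ ≤ exp (t ^ 2 * (b - a) ^ 2 / 8) := secant_exp_mul_at_zero_le ha hb.le hab t

lemma integral_mul_le_of_condExp_le [IsFiniteMeasure μ] (hm : m ≤ m0) {f g : Ω → ℝ} {K : ℝ}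
    (hf : StronglyMeasurable[m] f) (hf0 : 0 ≤ f) (hf_int : Integrable f μ) (hg : Integrable g μ)
    (hfg : Integrable (fun ω => f ω * g ω) μ) (hgK : μ[g | m] ≤ᵐ[μ] fun _ => K) :
    ∫ ω, f ω * g ω ∂μ ≤ K * ∫ ω, f ω ∂μ := by
  have hpull : μ[f * g | m] ≤ᵐ[μ] fun ω => K * f ω := by
    filter_upwards [condExp_mul_of_stronglyMeasurable_left hf hfg hg, hgK] with ω h1 h2
    rw [h1, Pi.mul_apply, mul_comm K]
    exact mul_le_mul_of_nonneg_left h2 (hf0 ω)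
  calc ∫ ω, f ω * g ω ∂μ = ∫ ω, μ[f * g | m] ω ∂μ := (integral_condExp hm).symm
    _ ≤ ∫ ω, K * f ω ∂μ := integral_mono_ae integrable_condExp (hf_int.const_mul K) hpull
    _ = K * ∫ ω, f ω ∂μ := integral_const_mul K _

end Conditional

lemma integrable_exp_mul_sum {Ω ι : Type*} [MeasurableSpace Ω] {μ : Measure Ω} [IsFiniteMeasure μ]
    {X : ι → Ω → ℝ} {a b : ι → ℝ} (s : Finset ι) (hX : ∀ i ∈ s, AEMeasurable (X i) μ)
    (hmem : ∀ i ∈ s, ∀ᵐ ω ∂μ, X i ω ∈ Set.Icc (a i) (b i)) (t : ℝ) :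
    Integrable (fun ω => exp (t * ∑ i ∈ s, X i ω)) μ := by
  refine integrable_exp_mul_of_mem_Icc (a := ∑ i ∈ s, a i) (b := ∑ i ∈ s, b i)
    (Finset.aemeasurable_fun_sum s hX) ?_
  filter_upwards [(Filter.eventually_all_finset s).2 hmem] with ω hω
  exact ⟨Finset.sum_le_sum fun i hi => (hω i hi).1, Finset.sum_le_sum fun i hi => (hω i hi).2⟩

theorem stmt_2_general {Ω : Type*} [m0 : MeasurableSpace Ω] (μ : Measure Ω) [IsProbabilityMeasure μ]
    (n : ℕ) (X : ℕ → Ω → ℝ) (a b : ℕ → ℝ)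
    (𝒢 : ℕ → MeasurableSpace Ω) (h𝒢 : ∀ i, 𝒢 i ≤ m0) (h𝒢mono : Monotone 𝒢)
    (hadapt : ∀ i, Measurable[𝒢 (i + 1)] (X i))
    (hmem : ∀ i, ∀ᵐ ω ∂μ, X i ω ∈ Set.Icc (a i) (b i))
    (hsuper : ∀ i, ∀ᵐ ω ∂μ, (μ[X i | 𝒢 i]) ω ≤ 0)
    (lam : ℝ) (hlam : 0 < lam) :
    ∫ ω, Real.exp (lam * ∑ i ∈ Finset.range n, X i ω) ∂μ ≤
      Real.exp (lam ^ 2 / 8 * ∑ i ∈ Finset.range n, (b i - a i) ^ 2) := by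
  have hX (i : ℕ) : AEMeasurable (X i) μ := ((hadapt i).mono (h𝒢 (i + 1)) le_rfl).aemeasurable
  have hint (k : ℕ) := integrable_exp_mul_sum (μ := μ) (a := a) (b := b) (Finset.range k)
    (fun i _ => hX i) (fun i _ => hmem i) lam
  induction n with
  | zero => simp
  | succ n ih =>
    have hpast : Measurable[𝒢 n] fun ω => lam * ∑ i ∈ Finset.range n, X i ω :=
      (Finset.measurable_fun_sum _ fun i hi =>
        (hadapt i).mono (h𝒢mono (Finset.mem_range.1 hi)) le_rfl).const_mul lam
    have hprod_int : Integrable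
        (fun ω => exp (lam * ∑ i ∈ Finset.range n, X i ω) * exp (lam * X n ω)) μ := by
      simpa only [Finset.sum_range_succ, mul_add, exp_add] using hint (n + 1)
    calc ∫ ω, exp (lam * ∑ i ∈ Finset.range (n + 1), X i ω) ∂μ
        = ∫ ω, exp (lam * ∑ i ∈ Finset.range n, X i ω) * exp (lam * X n ω) ∂μ := by
          simp only [Finset.sum_range_succ, mul_add, exp_add]
      _ ≤ exp (lam ^ 2 * (b n - a n) ^ 2 / 8) * ∫ ω, exp (lam * ∑ i ∈ Finset.range n, X i ω) ∂μ :=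
          integral_mul_le_of_condExp_le (h𝒢 n) (measurable_exp.comp hpast).stronglyMeasurable
            (fun ω => (exp_pos _).le) (hint n) (integrable_exp_mul_of_mem_Icc (hX n) (hmem n))
            hprod_int
            (condExp_exp_mul_le (h𝒢 n) (hX n) hlam.le (hmem n) (hsuper n))
      _ ≤ exp (lam ^ 2 * (b n - a n) ^ 2 / 8) *
            exp (lam ^ 2 / 8 * ∑ i ∈ Finset.range n, (b i - a i) ^ 2) := by gcongr
      _ = exp (lam ^ 2 / 8 * ∑ i ∈ Finset.range (n + 1), (b i - a i) ^ 2) := by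
          rw [← exp_add, Finset.sum_range_succ]
          ring_nf

/-- Hoeffding–Azuma moment generating function bound for supermartingale
difference sequences with bounded increments. -/
theorem stmt_2 {Ω : Type*} [m0 : MeasurableSpace Ω] (μ : Measure Ω) [IsProbabilityMeasure μ]
    (n : ℕ) (X : ℕ → Ω → ℝ) (a b : ℕ → ℝ)
    (𝒢 : ℕ → MeasurableSpace Ω) (h𝒢 : ∀ i, 𝒢 i ≤ m0) (h𝒢mono : Monotone 𝒢)
    (hadapt : ∀ i, Measurable[𝒢 (i + 1)] (X i))
    (hint : ∀ i, Integrable (X i) μ)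
    (hmem : ∀ i, ∀ᵐ ω ∂μ, X i ω ∈ Set.Icc (a i) (b i))
    (hsuper : ∀ i, ∀ᵐ ω ∂μ, (μ[X i | 𝒢 i]) ω ≤ 0)
    (lam : ℝ) (hlam : 0 < lam) :
    ∫ ω, Real.exp (lam * ∑ i ∈ Finset.range n, X i ω) ∂μ ≤
      Real.exp (lam ^ 2 / 8 * ∑ i ∈ Finset.range n, (b i - a i) ^ 2) :=
  stmt_2_general (m0 := m0) μ n X a b 𝒢 h𝒢 h𝒢mono hadapt hmem hsuper lam hlam
end

section
/- Let X₁,…,Xₙ be a martingale difference sequence (E[X_i | X₁,…,X_{i−1}] = 0) with X_i ≤ c almost surely for all i. Let Mₙ = Σ_{i=1}^n X_i and Vₙ = Σ_{i=1}^n E[X_i² | X₁,…,X_{i−1}]. Then for any λ ∈ [0, 1/c], E[exp(λ·Mₙ − (e−2)·λ²·Vₙ)] ≤ 1. -/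
/-!
Since `λ X_i ≤ λ c ≤ 1`, the scalar inequality `exp x ≤ 1 + x + (e - 2) x²` for `x ≤ 1`,
together with `E[X_i | 𝒢_i] = 0`, gives
`E[exp (λ X_i) | 𝒢_i] ≤ 1 + (e - 2) λ² E[X_i² | 𝒢_i] ≤ exp ((e - 2) λ² E[X_i² | 𝒢_i])`.
Hence `Z_n = exp (λ M_n - (e - 2) λ² V_n)` is a supermartingale, and `E[Z_n] ≤ E[Z_0] = 1`.
The constant comes from `e - 2 = ∑_{k ≥ 2} 1 / k!`: for `0 ≤ x ≤ 1` the series of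
`exp x - 1 - x` is dominated termwise by `x² ∑_{k ≥ 2} 1 / k!`, while for `x ≤ 0` already
`exp x ≤ 1 + x + x² / 2`.
-/

open MeasureTheory ProbabilityTheory Finset

namespace Real

lemma exp_le_one_add_add_sq_div_two_of_nonpos {x : ℝ} (hx : x ≤ 0) :
    exp x ≤ 1 + x + x ^ 2 / 2 := by
  let g : ℝ → ℝ := fun t => exp t - (1 + t + t ^ 2 / 2)
  have hg : ∀ t, HasDerivAt g (exp t - (1 + t)) t := fun t => by
    have h := (hasDerivAt_exp t).sub (((hasDerivAt_id' t).const_add 1).add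
      ((hasDerivAt_pow 2 t).div_const 2))
    exact h.congr_deriv (by norm_num)
  have hmono : Monotone g := monotone_of_deriv_nonneg (fun t => (hg t).differentiableAt)
    fun t => by rw [(hg t).deriv]; linarith [add_one_le_exp t]
  have := hmono hx
  simp only [g, exp_zero] at this
  linarith

lemma hasSum_pow_add_two_div_factorial (x : ℝ) :
    HasSum (fun k : ℕ => x ^ (k + 2) / (k + 2).factorial) (exp x - 1 - x) := by
  have h := NormedSpace.expSeries_div_hasSum_exp x
  rw [← exp_eq_exp_ℝ] at h
  simpa [sum_range_succ, sub_sub] using (hasSum_nat_add_iff' 2).2 h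

lemma exp_le_one_add_add_mul_sq_of_nonneg {x : ℝ} (h0 : 0 ≤ x) (h1 : x ≤ 1) :
    exp x ≤ 1 + x + (exp 1 - 2) * x ^ 2 := by
  have hle : exp x - 1 - x ≤ x ^ 2 * (exp 1 - 1 - 1) := by
    refine hasSum_le (fun k => ?_) (hasSum_pow_add_two_div_factorial x)
      ((hasSum_pow_add_two_div_factorial 1).mul_left (x ^ 2))
    rw [one_pow, mul_one_div, pow_add]
    gcongr
    exact mul_le_of_le_one_left (by positivity) (pow_le_one₀ h0 h1)
  linarith

lemma exp_le_one_add_add_mul_sq {x : ℝ} (hx : x ≤ 1) :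
    exp x ≤ 1 + x + (exp 1 - 2) * x ^ 2 := by
  rcases le_total x 0 with h | h
  · have he : (1 : ℝ) / 2 ≤ exp 1 - 2 := by linarith [exp_one_gt_d9]
    nlinarith [exp_le_one_add_add_sq_div_two_of_nonpos h, sq_nonneg x]
  · exact exp_le_one_add_add_mul_sq_of_nonneg h hx

lemma exp_one_sub_two_mul_sq_nonneg (lam : ℝ) : 0 ≤ (exp 1 - 2) * lam ^ 2 :=
  mul_nonneg (by linarith [exp_one_gt_d9]) (sq_nonneg lam)

end Real

open Real

section

variable {Ω : Type*} {m m0 : MeasurableSpace Ω} {μ : Measure Ω}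

lemma integrable_exp_of_le_one [IsFiniteMeasure μ] {f : Ω → ℝ} (hf : AEMeasurable f μ)
    (hf1 : ∀ᵐ ω ∂μ, f ω ≤ 1) : Integrable (fun ω => exp (f ω)) μ := by
  refine (integrable_const (exp 1)).mono' hf.exp.aestronglyMeasurable ?_
  filter_upwards [hf1] with ω hω
  rw [norm_of_nonneg (exp_nonneg _)]
  exact exp_le_exp.2 hω

lemma condExp_sq_nonneg (f : Ω → ℝ) (m : MeasurableSpace Ω) :
    0 ≤ᵐ[μ] μ[fun ω => f ω ^ 2 | m] :=
  condExp_nonneg (ae_of_all μ fun _ => sq_nonneg _)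

lemma condExp_exp_mul_le_s3 [IsFiniteMeasure μ] (hm : m ≤ m0) {X : Ω → ℝ} {c lam : ℝ}
    (hX : Integrable X μ) (hX2 : Integrable (fun ω => X ω ^ 2) μ) (hXc : ∀ᵐ ω ∂μ, X ω ≤ c)
    (hX0 : μ[X | m] =ᵐ[μ] 0) (hlam : 0 ≤ lam) (hlamc : lam * c ≤ 1) :
    μ[fun ω => exp (lam * X ω) | m] ≤ᵐ[μ]
      fun ω => exp ((exp 1 - 2) * lam ^ 2 * μ[fun ω' => X ω' ^ 2 | m] ω) := by
  set a := (exp 1 - 2) * lam ^ 2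
  have hlamX : ∀ᵐ ω ∂μ, lam * X ω ≤ 1 := by
    filter_upwards [hXc] with ω hω
    nlinarith
  have hquad : (fun ω => exp (lam * X ω)) ≤ᵐ[μ]
      (fun _ => (1 : ℝ)) + lam • X + a • fun ω => X ω ^ 2 := by
    filter_upwards [hlamX] with ω hω
    have := exp_le_one_add_add_mul_sq hω
    simp only [Pi.add_apply, Pi.smul_apply, smul_eq_mul]
    linarith
  have hlin : μ[(fun _ => (1 : ℝ)) + lam • X + a • fun ω => X ω ^ 2 | m] =ᵐ[μ]
      fun ω => 1 + a * μ[fun ω => X ω ^ 2 | m] ω := by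
    filter_upwards [condExp_add ((integrable_const 1).add (hX.smul lam)) (hX2.smul a) m,
      condExp_add (integrable_const 1) (hX.smul lam) m, condExp_smul lam X m,
      condExp_smul a (fun ω => X ω ^ 2) m, hX0] with ω h1 h2 h3 h4 h5
    simp only [h1, h2, h3, h4, Pi.add_apply, Pi.smul_apply, smul_eq_mul, h5,
      condExp_const hm, Pi.zero_apply, mul_zero, add_zero]
  filter_upwards [condExp_mono (integrable_exp_of_le_one (hX.aemeasurable.const_mul lam) hlamX)
    ((integrable_const 1).add (hX.smul lam) |>.add (hX2.smul a)) hquad, hlin]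
    with ω hmono heq
  rw [heq] at hmono
  linarith [add_one_le_exp (a * μ[fun ω => X ω ^ 2 | m] ω)]

end

section

variable {Ω : Type*} {m0 : MeasurableSpace Ω} {μ : Measure Ω} {ℱ : Filtration ℕ m0}
  {X : ℕ → Ω → ℝ} {lam : ℝ}

noncomputable def bernsteinProcess (μ : Measure Ω) (ℱ : Filtration ℕ m0) (X : ℕ → Ω → ℝ)
    (lam : ℝ) (n : ℕ) (ω : Ω) : ℝ :=
  exp (lam * (∑ i ∈ range n, X i ω)
    - (exp 1 - 2) * lam ^ 2 * (∑ i ∈ range n, (μ[fun ω' => (X i ω') ^ 2 | ℱ i]) ω))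

lemma bernsteinProcess_pos (n : ℕ) (ω : Ω) : 0 < bernsteinProcess μ ℱ X lam n ω :=
  exp_pos _

@[simp]
lemma bernsteinProcess_zero : bernsteinProcess μ ℱ X lam 0 = 1 := by
  ext ω
  simp [bernsteinProcess]

lemma bernsteinProcess_succ (n : ℕ) :
    bernsteinProcess μ ℱ X lam (n + 1) =
      (fun ω => bernsteinProcess μ ℱ X lam n ω
        * exp (-((exp 1 - 2) * lam ^ 2 * μ[fun ω' => X n ω' ^ 2 | ℱ n] ω)))
      * fun ω => exp (lam * X n ω) := by
  ext ω
  simp only [bernsteinProcess, sum_range_succ, Pi.mul_apply, ← exp_add]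
  ring_nf

lemma stronglyAdapted_bernsteinProcess (hX : ∀ i, Measurable[ℱ (i + 1)] (X i)) :
    StronglyAdapted ℱ (bernsteinProcess μ ℱ X lam) := fun n => by
  have hM : Measurable[ℱ n] fun ω => ∑ i ∈ range n, X i ω :=
    Finset.measurable_sum _ fun i hi => (hX i).mono (ℱ.mono (mem_range.1 hi)) le_rfl
  have hV : Measurable[ℱ n] fun ω => ∑ i ∈ range n, μ[fun ω' => X i ω' ^ 2 | ℱ i] ω :=
    Finset.measurable_sum _ fun i hi =>
      stronglyMeasurable_condExp.measurable.mono (ℱ.mono (mem_range.1 hi).le) le_rfl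
  exact ((hM.const_mul lam).sub (hV.const_mul _)).exp.stronglyMeasurable

lemma bernsteinProcess_le_exp (hX : ∀ i, ∀ᵐ ω ∂μ, lam * X i ω ≤ 1) (n : ℕ) :
    ∀ᵐ ω ∂μ, bernsteinProcess μ ℱ X lam n ω ≤ exp n := by
  filter_upwards [ae_all_iff.2 hX, ae_all_iff.2 fun i => condExp_sq_nonneg (μ := μ) (X i) (ℱ i)]
    with ω hXω hVω
  have hM : lam * ∑ i ∈ range n, X i ω ≤ n := by
    simpa [mul_sum] using sum_le_sum fun i (_ : i ∈ range n) => hXω i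
  have hV : 0 ≤ (exp 1 - 2) * lam ^ 2 * ∑ i ∈ range n, μ[fun ω' => X i ω' ^ 2 | ℱ i] ω :=
    mul_nonneg (exp_one_sub_two_mul_sq_nonneg lam) (sum_nonneg fun i _ => hVω i)
  exact exp_le_exp.2 (by linarith)

lemma integrable_bernsteinProcess [IsFiniteMeasure μ] (hadapt : ∀ i, Measurable[ℱ (i + 1)] (X i))
    (hX : ∀ i, ∀ᵐ ω ∂μ, lam * X i ω ≤ 1) (n : ℕ) :
    Integrable (bernsteinProcess μ ℱ X lam n) μ := by
  refine (integrable_const (exp n)).mono'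
    ((stronglyAdapted_bernsteinProcess hadapt n).mono (ℱ.le n)).aestronglyMeasurable ?_
  filter_upwards [bernsteinProcess_le_exp hX n] with ω hω
  rwa [norm_of_nonneg (bernsteinProcess_pos n ω).le]

lemma supermartingale_bernsteinProcess [IsFiniteMeasure μ] {c : ℝ}
    (hadapt : ∀ i, Measurable[ℱ (i + 1)] (X i)) (hint : ∀ i, Integrable (X i) μ)
    (hint2 : ∀ i, Integrable (fun ω => X i ω ^ 2) μ) (hbdd : ∀ i, ∀ᵐ ω ∂μ, X i ω ≤ c)
    (hmart : ∀ i, μ[X i | ℱ i] =ᵐ[μ] 0) (hlam : 0 ≤ lam) (hlamc : lam * c ≤ 1) :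
    Supermartingale (bernsteinProcess μ ℱ X lam) ℱ μ := by
  have hZ := stronglyAdapted_bernsteinProcess (μ := μ) (lam := lam) hadapt
  have hlamX : ∀ i, ∀ᵐ ω ∂μ, lam * X i ω ≤ 1 := fun i => by
    filter_upwards [hbdd i] with ω hω
    nlinarith
  refine supermartingale_nat hZ (integrable_bernsteinProcess hadapt hlamX) fun n => ?_
  set W := μ[fun ω' => X n ω' ^ 2 | ℱ n]
  -- `Z (n + 1) = G * exp (λ X n)` with `G` bounded and `ℱ n`-measurable,
  -- so `G` pulls out of `μ[· | ℱ n]`.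
  set G := fun ω => bernsteinProcess μ ℱ X lam n ω * exp (-((exp 1 - 2) * lam ^ 2 * W ω))
  have hGmeas : StronglyMeasurable[ℱ n] G :=
    (hZ n).mul (stronglyMeasurable_condExp.measurable.const_mul _).neg.exp.stronglyMeasurable
  have hGbdd : ∀ᵐ ω ∂μ, ‖G ω‖ ≤ exp n := by
    filter_upwards [bernsteinProcess_le_exp hlamX n, condExp_sq_nonneg (μ := μ) (X n) (ℱ n)]
      with ω hZω hWω
    have hZpos := bernsteinProcess_pos (μ := μ) (ℱ := ℱ) (X := X) (lam := lam) n ω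
    have hexp : exp (-((exp 1 - 2) * lam ^ 2 * W ω)) ≤ 1 :=
      exp_le_one_iff.2 (neg_nonpos.2 (mul_nonneg (exp_one_sub_two_mul_sq_nonneg lam) hWω))
    rw [norm_of_nonneg (by positivity)]
    exact (mul_le_of_le_one_right hZpos.le hexp).trans hZω
  rw [bernsteinProcess_succ]
  filter_upwards [condExp_stronglyMeasurable_mul_of_bound (ℱ.le n) hGmeas
    (integrable_exp_of_le_one ((hint n).aemeasurable.const_mul lam) (hlamX n)) _ hGbdd,
    condExp_exp_mul_le_s3 (ℱ.le n) (hint n) (hint2 n) (hbdd n) (hmart n) hlam hlamc]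
    with ω hpull hstep
  calc μ[G * fun ω => exp (lam * X n ω) | ℱ n] ω
      = G ω * μ[fun ω => exp (lam * X n ω) | ℱ n] ω := hpull
    _ ≤ G ω * exp ((exp 1 - 2) * lam ^ 2 * W ω) :=
        mul_le_mul_of_nonneg_left hstep (mul_pos (bernsteinProcess_pos n ω) (exp_pos _)).le
    _ = bernsteinProcess μ ℱ X lam n ω := by
        simp only [G, mul_assoc, ← exp_add, neg_add_cancel, exp_zero, mul_one]

lemma integral_bernsteinProcess_le_one [IsProbabilityMeasure μ] {c : ℝ}
    (hadapt : ∀ i, Measurable[ℱ (i + 1)] (X i)) (hint : ∀ i, Integrable (X i) μ)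
    (hint2 : ∀ i, Integrable (fun ω => X i ω ^ 2) μ) (hbdd : ∀ i, ∀ᵐ ω ∂μ, X i ω ≤ c)
    (hmart : ∀ i, μ[X i | ℱ i] =ᵐ[μ] 0) (hlam : 0 ≤ lam) (hlamc : lam * c ≤ 1) (n : ℕ) :
    ∫ ω, bernsteinProcess μ ℱ X lam n ω ∂μ ≤ 1 := by
  have hZ := supermartingale_bernsteinProcess hadapt hint hint2 hbdd hmart hlam hlamc
  simpa using hZ.setIntegral_le (Nat.zero_le n) MeasurableSet.univ

end

/-- Bernstein-type moment generating function inequality for martingales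
(Seldin et al.). -/
theorem stmt_3 {Ω : Type*} [m0 : MeasurableSpace Ω] (μ : Measure Ω) [IsProbabilityMeasure μ]
    (n : ℕ) (X : ℕ → Ω → ℝ) (c : ℝ) (hc : 0 < c)
    (𝒢 : ℕ → MeasurableSpace Ω) (h𝒢 : ∀ i, 𝒢 i ≤ m0) (h𝒢mono : Monotone 𝒢)
    (hadapt : ∀ i, Measurable[𝒢 (i + 1)] (X i))
    (hint : ∀ i, Integrable (X i) μ)
    (hint2 : ∀ i, Integrable (fun ω => (X i ω) ^ 2) μ)
    (hbdd : ∀ i, ∀ᵐ ω ∂μ, X i ω ≤ c)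
    (hmart : ∀ i, ∀ᵐ ω ∂μ, (μ[X i | 𝒢 i]) ω = 0)
    (lam : ℝ) (hlam : lam ∈ Set.Icc 0 (1 / c)) :
    ∫ ω, Real.exp (lam * (∑ i ∈ Finset.range n, X i ω)
        - (Real.exp 1 - 2) * lam ^ 2 *
          (∑ i ∈ Finset.range n, (μ[fun ω' => (X i ω') ^ 2 | 𝒢 i]) ω)) ∂μ ≤ 1 :=
  integral_bernsteinProcess_le_one (ℱ := ⟨𝒢, h𝒢mono, h𝒢⟩) hadapt hint hint2 hbdd hmart
    hlam.1 ((le_div_iff₀ hc).1 hlam.2) n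
end

section
/- Let w₁,…,w_K be i.i.d. samples from 𝒫 and φ a bounded measurable function. Then E[ln((1/K)Σ_{k=1}^K exp(φ(w_k)))] is nondecreasing in K, is always at most ln(E_{w~𝒫}[exp(φ(w))]), and converges to ln(E_{w~𝒫}[exp(φ(w))]) as K → ∞. -/
/-!
Let `S_K` be the mean of `K` i.i.d. copies of `f = exp ∘ φ`, which is bounded below by
`a = exp (-C) > 0`, and let `m = E f`. Jensen's inequality for the concave `log` gives
`E log S_K ≤ log E S_K = log m`. Since `S_{K+1}` is the average of its `K + 1` leave-one-out means,
each distributed as `S_K`, concavity also gives `E log S_K ≤ E log S_{K+1}`. For the limit, the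
second-order bound `log m + (x - m) / m - (x - m)² / a² ≤ log x` (for `x, m ≥ a`) together with
`Var S_K = Var f / K` squeezes `log m - Var f / (a² K) ≤ E log S_K ≤ log m`.
-/

open MeasureTheory Filter
open scoped ENNReal

noncomputable section

/-- The expected log of the `K`-sample Monte Carlo estimate of
`E_{w~Pm}[exp(φ(w))]`, where `w₁, …, w_K` are i.i.d. samples from `Pm`. -/
def logMC {W : Type*} [MeasurableSpace W] (Pm : Measure W) (φ : W → ℝ) (K : ℕ) : ℝ :=
  ∫ w : Fin K → W, Real.log ((K : ℝ)⁻¹ * ∑ k : Fin K, Real.exp (φ (w k)))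
    ∂(Measure.pi fun _ : Fin K => Pm)

open ProbabilityTheory

def sampleMean {W : Type*} (f : W → ℝ) (K : ℕ) (w : Fin K → W) : ℝ :=
  (K : ℝ)⁻¹ * ∑ k, f (w k)

lemma Real.log_add_div_sub_sq_div_le_log {a x m : ℝ} (ha : 0 < a) (hx : a ≤ x) (hm : a ≤ m) :
    Real.log m + (x - m) / m - (x - m) ^ 2 / a ^ 2 ≤ Real.log x := by
  have hx0 : 0 < x := ha.trans_le hx
  have hm0 : 0 < m := ha.trans_le hm
  have htangent : Real.log m - Real.log x ≤ m / x - 1 := by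
    rw [← Real.log_div hm0.ne' hx0.ne']
    exact Real.log_le_sub_one_of_pos (div_pos hm0 hx0)
  have hsplit : (x - m) / m - (x - m) ^ 2 / (m * x) = 1 - m / x := by
    field_simp
    ring
  have hquad : (x - m) ^ 2 / (m * x) ≤ (x - m) ^ 2 / a ^ 2 := by
    gcongr
    nlinarith
  linarith

section Expectation

variable {Ω : Type*} [MeasurableSpace Ω] {μ : Measure Ω} {X : Ω → ℝ} {a : ℝ}

lemma integrable_log_of_le [IsFiniteMeasure μ] (ha : 0 < a) (hX : ∀ᵐ ω ∂μ, a ≤ X ω)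
    (hint : Integrable X μ) :
    Integrable (fun ω => Real.log (X ω)) μ := by
  refine (hint.abs.add (integrable_const |Real.log a|)).mono'
    (g := fun ω => |X ω| + |Real.log a|) hint.aemeasurable.log.aestronglyMeasurable ?_
  filter_upwards [hX] with ω hω
  have hX0 : 0 < X ω := ha.trans_le hω
  rw [Real.norm_eq_abs, abs_le]
  constructor
  · have := Real.log_le_log ha hω
    linarith [neg_abs_le (Real.log a), abs_nonneg (X ω)]
  · have := Real.log_le_sub_one_of_pos hX0
    linarith [le_abs_self (X ω), abs_nonneg (Real.log a)]

variable [IsProbabilityMeasure μ]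

lemma integral_log_le_log_integral (ha : 0 < a) (hX : ∀ᵐ ω ∂μ, a ≤ X ω)
    (hint : Integrable X μ) :
    ∫ ω, Real.log (X ω) ∂μ ≤ Real.log (∫ ω, X ω ∂μ) := by
  have hsub : Set.Ici a ⊆ Set.Ioi 0 := Set.Ici_subset_Ioi.mpr ha
  exact (strictConcaveOn_log_Ioi.concaveOn.subset hsub (convex_Ici a)).le_map_integral
    (Real.continuousOn_log.mono fun x hx => (ne_of_gt (hsub hx)))
    isClosed_Ici hX hint (integrable_log_of_le ha hX hint)

lemma log_integral_sub_variance_div_le_integral_log (ha : 0 < a) (hX : ∀ᵐ ω ∂μ, a ≤ X ω)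
    (hX2 : MemLp X 2 μ) :
    Real.log (∫ ω, X ω ∂μ) - Var[X; μ] / a ^ 2 ≤ ∫ ω, Real.log (X ω) ∂μ := by
  set m := ∫ ω, X ω ∂μ
  have hint : Integrable X μ := hX2.integrable one_le_two
  have hm : a ≤ m := by
    simpa using integral_mono_ae (integrable_const a) hint hX
  have hsq : Integrable (fun ω => (X ω - m) ^ 2) μ :=
    (hX2.sub (memLp_const m)).integrable_sq
  have hcentered : Integrable (fun ω => (X ω - m) / m) μ :=
    (hint.sub (integrable_const m)).div_const m
  have htangent : Integrable (fun ω => Real.log m + (X ω - m) / m) μ :=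
    (integrable_const _).add hcentered
  have hquad : Integrable (fun ω => Real.log m + (X ω - m) / m - (X ω - m) ^ 2 / a ^ 2) μ :=
    htangent.sub (hsq.div_const _)
  calc Real.log m - Var[X; μ] / a ^ 2
      = ∫ ω, (Real.log m + (X ω - m) / m - (X ω - m) ^ 2 / a ^ 2) ∂μ := by
        rw [integral_sub htangent (hsq.div_const _),
          integral_add (integrable_const _) hcentered, integral_div, integral_div,
          integral_sub hint (integrable_const m), variance_eq_integral hint.aemeasurable]
        simp [m]
    _ ≤ ∫ ω, Real.log (X ω) ∂μ :=
        integral_mono_ae hquad (integrable_log_of_le ha hX hint)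
          (hX.mono fun ω hω => Real.log_add_div_sub_sq_div_le_log ha hω hm)

end Expectation

section SampleMean

variable {W : Type*} {f : W → ℝ} {K : ℕ}

lemma sampleMean_mem {s : Set ℝ} (hs : Convex ℝ s) (hf : ∀ x, f x ∈ s) (hK : K ≠ 0)
    (w : Fin K → W) : sampleMean f K w ∈ s := by
  rw [sampleMean, Finset.mul_sum]
  refine hs.sum_mem (fun _ _ => by positivity) ?_ fun k _ => hf (w k)
  simp [hK]

lemma sampleMean_succ (hK : K ≠ 0) (w : Fin (K + 1) → W) :
    sampleMean f (K + 1) w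
      = ∑ i, ((K : ℝ) + 1)⁻¹ * sampleMean f K (Fin.removeNth i w) := by
  have hleave : ∀ i, ∑ k, f (Fin.removeNth i w k) = ∑ j, f (w j) - f (w i) := fun i => by
    rw [Fin.sum_univ_succAbove (fun j => f (w j)) i]
    simp [Fin.removeNth]
  simp only [sampleMean, hleave, ← Finset.mul_sum, Finset.sum_sub_distrib, Finset.sum_const,
    Finset.card_univ, Fintype.card_fin, nsmul_eq_mul]
  push_cast
  field_simp
  ring

variable [MeasurableSpace W] (μ : Measure W) [IsProbabilityMeasure μ]

lemma measurePreserving_removeNth (i : Fin (K + 1)) :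
    MeasurePreserving (Fin.removeNth i : (Fin (K + 1) → W) → Fin K → W)
      (Measure.pi fun _ => μ) (Measure.pi fun _ => μ) :=
  (measurePreserving_snd (μ := μ)).comp (measurePreserving_piFinSuccAbove (fun _ => μ) i)

lemma integral_comp_removeNth {E : Type*} [NormedAddCommGroup E] [NormedSpace ℝ E]
    (g : (Fin K → W) → E) (i : Fin (K + 1)) :
    ∫ w, g (Fin.removeNth i w) ∂(Measure.pi fun _ => μ) = ∫ v, g v ∂(Measure.pi fun _ => μ) := by
  refine ((measurePreserving_piFinSuccAbove (fun _ => μ) i).integral_comp'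
    (fun p => g p.2)).trans ?_
  simp [integral_fun_snd]

lemma ConcaveOn.integral_comp_sampleMean_le_succ {ψ : ℝ → ℝ} {s : Set ℝ}
    (hψ : ConcaveOn ℝ s ψ) (hf : ∀ x, f x ∈ s) (hK : K ≠ 0)
    (hint : Integrable (fun w => ψ (sampleMean f K w)) (Measure.pi fun _ => μ))
    (hint' : Integrable (fun w => ψ (sampleMean f (K + 1) w)) (Measure.pi fun _ => μ)) :
    ∫ w, ψ (sampleMean f K w) ∂(Measure.pi fun _ => μ)
      ≤ ∫ w, ψ (sampleMean f (K + 1) w) ∂(Measure.pi fun _ => μ) := by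
  have hleave : ∀ i : Fin (K + 1), Integrable (fun w => ((K : ℝ) + 1)⁻¹ *
      ψ (sampleMean f K (Fin.removeNth i w))) (Measure.pi fun _ => μ) := fun i =>
    ((measurePreserving_removeNth μ i).integrable_comp_of_integrable hint).const_mul _
  have hjensen : ∀ w : Fin (K + 1) → W,
      ∑ i, ((K : ℝ) + 1)⁻¹ * ψ (sampleMean f K (Fin.removeNth i w))
        ≤ ψ (sampleMean f (K + 1) w) := fun w => by
    rw [sampleMean_succ hK]
    refine hψ.le_map_sum (fun _ _ => by positivity) ?_ fun i _ => sampleMean_mem hψ.1 hf hK _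
    simp [Finset.card_univ]
    field_simp
  calc ∫ w, ψ (sampleMean f K w) ∂(Measure.pi fun _ => μ)
      = ∫ w, ∑ i, ((K : ℝ) + 1)⁻¹ * ψ (sampleMean f K (Fin.removeNth i w))
          ∂(Measure.pi fun _ => μ) := by
        simp [integral_finsetSum _ fun i _ => hleave i, integral_const_mul,
          integral_comp_removeNth μ (fun v => ψ (sampleMean f K v))]
        field_simp
    _ ≤ ∫ w, ψ (sampleMean f (K + 1) w) ∂(Measure.pi fun _ => μ) :=
        integral_mono (integrable_finsetSum _ fun i _ => hleave i) hint' hjensen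

lemma integrable_sampleMean (hf : Integrable f μ) :
    Integrable (sampleMean f K) (Measure.pi fun _ => μ) :=
  (integrable_finsetSum _ fun k _ =>
    (measurePreserving_eval _ k).integrable_comp_of_integrable hf).const_mul _

lemma integral_sampleMean (hf : Integrable f μ) (hK : K ≠ 0) :
    ∫ w, sampleMean f K w ∂(Measure.pi fun _ => μ) = ∫ x, f x ∂μ := by
  have heval : ∀ k : Fin K, Integrable (fun w : Fin K → W => f (w k)) (Measure.pi fun _ => μ) :=
    fun k => (measurePreserving_eval _ k).integrable_comp_of_integrable hf
  simp only [sampleMean]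
  rw [integral_const_mul, integral_finsetSum _ fun k _ => heval k]
  simp [integral_comp_eval (μ := fun _ => μ) hf.aestronglyMeasurable, hK]

lemma memLp_sampleMean {p : ℝ≥0∞} (hf : MemLp f p μ) :
    MemLp (sampleMean f K) p (Measure.pi fun _ => μ) :=
  (memLp_finsetSum _ fun k _ => hf.comp_measurePreserving (measurePreserving_eval _ k)).const_mul _

lemma variance_sampleMean (hf : MemLp f 2 μ) :
    Var[sampleMean f K; Measure.pi fun _ => μ] = Var[f; μ] / K := by
  have hindep := iIndepFun_pi (μ := fun _ : Fin K => μ) (X := fun _ => f)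
    fun _ => hf.aestronglyMeasurable.aemeasurable
  have hsum : Var[∑ k, fun w : Fin K → W => f (w k); Measure.pi fun _ => μ] = K * Var[f; μ] := by
    rw [IndepFun.variance_sum (X := fun k (w : Fin K → W) => f (w k))
      (fun k _ => hf.comp_measurePreserving (measurePreserving_eval _ k))
      fun i _ j _ hij => hindep.indepFun hij]
    simp [(measurePreserving_eval (fun _ => μ) _).variance_fun_comp
      hf.aestronglyMeasurable.aemeasurable]
  have hsampleMean :
      sampleMean f K = fun w => (K : ℝ)⁻¹ * (∑ k, fun w : Fin K → W => f (w k)) w := by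
    ext w
    simp [sampleMean]
  rw [hsampleMean, variance_const_mul, hsum]
  rcases eq_or_ne K 0 with rfl | hK
  · simp
  · field_simp

variable {a : ℝ}

lemma integrable_log_sampleMean (ha : 0 < a) (hf : ∀ x, a ≤ f x) (hint : Integrable f μ)
    (hK : K ≠ 0) :
    Integrable (fun w => Real.log (sampleMean f K w)) (Measure.pi fun _ => μ) :=
  integrable_log_of_le ha (ae_of_all _ (sampleMean_mem (convex_Ici a) hf hK))
    (integrable_sampleMean μ hint)

lemma integral_log_sampleMean_le_log_integral (ha : 0 < a) (hf : ∀ x, a ≤ f x)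
    (hint : Integrable f μ) (hK : K ≠ 0) :
    ∫ w, Real.log (sampleMean f K w) ∂(Measure.pi fun _ => μ) ≤ Real.log (∫ x, f x ∂μ) := by
  rw [← integral_sampleMean μ hint hK]
  exact integral_log_le_log_integral ha (ae_of_all _ (sampleMean_mem (convex_Ici a) hf hK))
    (integrable_sampleMean μ hint)

lemma log_integral_sub_variance_div_le_integral_log_sampleMean (ha : 0 < a) (hf : ∀ x, a ≤ f x)
    (hf2 : MemLp f 2 μ) (hK : K ≠ 0) :
    Real.log (∫ x, f x ∂μ) - Var[f; μ] / a ^ 2 / K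
      ≤ ∫ w, Real.log (sampleMean f K w) ∂(Measure.pi fun _ => μ) := by
  have := log_integral_sub_variance_div_le_integral_log ha
    (ae_of_all _ (sampleMean_mem (convex_Ici a) hf hK)) (memLp_sampleMean μ hf2)
  rwa [integral_sampleMean μ (hf2.integrable one_le_two) hK, variance_sampleMean μ hf2,
    div_right_comm] at this

end SampleMean

/-- Burda et al.: the expected log Monte Carlo estimate is nondecreasing in
`K`, is at most `ln E_{w~Pm}[exp(φ(w))]`, and converges to it as `K → ∞`. -/
theorem stmt_12 {W : Type*} [MeasurableSpace W] (Pm : Measure W) [IsProbabilityMeasure Pm]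
    (φ : W → ℝ) (hφ : Measurable φ) (C : ℝ) (hbdd : ∀ w, |φ w| ≤ C) :
    (∀ K : ℕ, 1 ≤ K → logMC Pm φ K ≤ logMC Pm φ (K + 1))
    ∧ (∀ K : ℕ, 1 ≤ K → logMC Pm φ K ≤ Real.log (∫ w, Real.exp (φ w) ∂Pm))
    ∧ Tendsto (fun K => logMC Pm φ K) atTop (nhds (Real.log (∫ w, Real.exp (φ w) ∂Pm))) := by
  set f : W → ℝ := fun w => Real.exp (φ w)
  have hf : ∀ w, Real.exp (-C) ≤ f w := fun w => Real.exp_le_exp.mpr (neg_le_of_abs_le (hbdd w))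
  have hf2 : MemLp f 2 Pm := MemLp.of_bound (Real.measurable_exp.comp hφ).aestronglyMeasurable
    (Real.exp C) (ae_of_all _ fun w => by
      rw [Real.norm_eq_abs, abs_of_pos (Real.exp_pos _)]
      exact Real.exp_le_exp.mpr (le_of_abs_le (hbdd w)))
  have hint := hf2.integrable one_le_two
  have upper : ∀ K, 1 ≤ K → logMC Pm φ K ≤ Real.log (∫ w, f w ∂Pm) := fun K hK =>
    integral_log_sampleMean_le_log_integral Pm (Real.exp_pos _) hf hint (by omega)
  have lower : ∀ K, 1 ≤ K →
      Real.log (∫ w, f w ∂Pm) - Var[f; Pm] / Real.exp (-C) ^ 2 / K ≤ logMC Pm φ K := fun K hK =>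
    log_integral_sub_variance_div_le_integral_log_sampleMean Pm (Real.exp_pos _) hf hf2 (by omega)
  refine ⟨fun K hK => ?_, upper, ?_⟩
  · exact strictConcaveOn_log_Ioi.concaveOn.integral_comp_sampleMean_le_succ Pm
      (fun w => Real.exp_pos (φ w)) (by omega)
      (integrable_log_sampleMean Pm (Real.exp_pos _) hf hint (by omega))
      (integrable_log_sampleMean Pm (Real.exp_pos _) hf hint (by omega))
  · refine tendsto_of_tendsto_of_tendsto_of_le_of_le' ?_ tendsto_const_nhds
      (eventually_atTop.2 ⟨1, lower⟩) (eventually_atTop.2 ⟨1, upper⟩)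
    simpa using (tendsto_const_nhds (x := Real.log (∫ w, f w ∂Pm))).sub
      (tendsto_const_div_atTop_nhds_zero_nat (Var[f; Pm] / Real.exp (-C) ^ 2))

end
end
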